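/- Define l(α)=inf{ λ(αu,ℝ^d) : u∈B₁, I(u)≤d }, where λ(V,D) is the principal Dirichlet eigenvalue of −(1/2)Δ−V on D. Then l is concave, continuous, l(0)=0, l≤0 everywhere, and −αM ≤ l(α) for α≥0, −αm ≤ l(α) for α≤0, where m=essinf ξ, M=esssup ξ. -/

import Mathlib

/-!
For a fixed profile `u`, `λ(α u)` is the infimum over unit test functions `f` of the affine
functions `α ↦ ½ ∫ ‖∇f‖² - α ∫ u f²`, whose slopes `-∫ u f²` lie in `[-1, 1]`. Hence it is
concave and 1-Lipschitz in `α`, and so is `l`, an infimum of such functions.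
Since `Λ t ≤ t M` for `t ≥ 0` and `Λ t ≤ t m` for `t ≤ 0`, `H = ∞` off `[m, M]`, so `I(u) ≤ d`
forces `m ≤ u ≤ M` a.e.; then `∫ u f² ∈ [m, M]`, which gives the lower bounds.
`e^x ≥ 1 + x` and `E ξ = 0` give `Λ ≥ 0`, so `H 0 = 0` and `u = 0` is admissible;
`λ(0) = 0` because `f ↦ c^{d/2} f(c ·)` preserves `∫ f² = 1` and scales the energy by `c²`.
-/

open MeasureTheory
open scoped ENNReal

/-- The principal Dirichlet eigenvalue of `−(1/2)Δ − V` on `ℝ^d`, defined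
variationally over (smooth compactly supported) test functions of unit `L²`
norm. -/
noncomputable def eigen (d : ℕ) (V : EuclideanSpace ℝ (Fin d) → ℝ) : ℝ :=
  sInf {r : ℝ | ∃ f : EuclideanSpace ℝ (Fin d) → ℝ,
    ContDiff ℝ 1 f ∧ HasCompactSupport f ∧ (∫ x, (f x) ^ 2) = 1 ∧
    r = 1 / 2 * (∫ x, ‖gradient f x‖ ^ 2) - ∫ x, V x * (f x) ^ 2}

/-- `l(α) = inf { λ(α u, ℝ^d) : u ∈ B₁, I(u) ≤ d }` with `I(u) = ∫ H(u) dx`. -/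
noncomputable def ell (d : ℕ) (H : ℝ → ℝ≥0∞) (α : ℝ) : ℝ :=
  sInf {r : ℝ | ∃ u : EuclideanSpace ℝ (Fin d) → ℝ,
    Measurable u ∧ (∀ x, |u x| ≤ 1) ∧ (∫⁻ x, H (u x)) ≤ (d : ℝ≥0∞) ∧
    r = eigen d (fun x => α * u x)}

open ProbabilityTheory Set Filter Topology Module
open scoped NNReal

section InfimumOfFamily

variable {ι : Sort*} [Nonempty ι]

theorem ConcaveOn.ciInf {E : Type*} [AddCommMonoid E] [SMul ℝ E] {s : Set E} {g : ι → E → ℝ}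
    (hg : ∀ i, ConcaveOn ℝ s (g i)) (hbdd : ∀ x ∈ s, BddBelow (range fun i => g i x)) :
    ConcaveOn ℝ s fun x => ⨅ i, g i x :=
  ⟨(hg (Classical.arbitrary ι)).1, fun x hx y hy _ _ ha hb hab => le_ciInf fun i =>
    (add_le_add (smul_le_smul_of_nonneg_left (ciInf_le (hbdd x hx) i) ha)
      (smul_le_smul_of_nonneg_left (ciInf_le (hbdd y hy) i) hb)).trans
      ((hg i).2 hx hy ha hb hab)⟩

theorem LipschitzWith.ciInf {α : Type*} [PseudoMetricSpace α] {K : ℝ≥0} {g : ι → α → ℝ}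
    (hg : ∀ i, LipschitzWith K (g i)) (hbdd : ∀ x, BddBelow (range fun i => g i x)) :
    LipschitzWith K fun x => ⨅ i, g i x :=
  LipschitzWith.of_le_add_mul K fun x y => sub_le_iff_le_add.1 <| le_ciInf fun i =>
    sub_le_iff_le_add.2 ((ciInf_le (hbdd x) i).trans ((hg i).le_add_mul x y))

end InfimumOfFamily

theorem concaveOn_const_sub_mul (a b : ℝ) : ConcaveOn ℝ univ fun t : ℝ => a - t * b :=
  ⟨convex_univ, fun x _ y _ p q _ _ hpq => le_of_eq <| by
    simp only [smul_eq_mul]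
    linear_combination a * hpq⟩

theorem lipschitzWith_const_sub_mul (a : ℝ) {b : ℝ} (hb : |b| ≤ 1) :
    LipschitzWith 1 fun t : ℝ => a - t * b :=
  LipschitzWith.of_le_add fun x y => by
    have h : (y - x) * b ≤ |y - x| :=
      calc (y - x) * b ≤ |(y - x) * b| := le_abs_self _
        _ = |y - x| * |b| := abs_mul _ _
        _ ≤ |y - x| := mul_le_of_le_one_right (abs_nonneg _) hb
    rw [Real.dist_eq, abs_sub_comm]
    linarith

theorem mul_mem_Icc_neg_abs_abs {a b : ℝ} (hb : |b| ≤ 1) : a * b ∈ Icc (-|a|) |a| :=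
  abs_le.1 <| (abs_mul a b).trans_le (mul_le_of_le_one_right (abs_nonneg a) hb)

theorem integral_mul_sq_mem_Icc {X : Type*} [TopologicalSpace X] [MeasurableSpace X]
    [OpensMeasurableSpace X] {μ : Measure X} [IsFiniteMeasureOnCompacts μ] {f V : X → ℝ}
    (hf : Continuous f) (hfc : HasCompactSupport f) (hf1 : ∫ x, f x ^ 2 ∂μ = 1)
    (hV : AEStronglyMeasurable V μ) {a b : ℝ} (hab : ∀ᵐ x ∂μ, V x ∈ Icc a b) :
    ∫ x, V x * f x ^ 2 ∂μ ∈ Icc a b := by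
  have hsq : Integrable (fun x => f x ^ 2) μ := by
    have hsqc : HasCompactSupport fun x => f x ^ 2 :=
      hfc.comp_left (g := fun y : ℝ => y ^ 2) (by norm_num)
    exact (hf.pow 2).integrable_of_hasCompactSupport hsqc
  have hVf : Integrable (fun x => V x * f x ^ 2) μ :=
    hsq.bdd_mul hV (c := max |a| |b|) (hab.mono fun x hx => by
      rw [Real.norm_eq_abs]; exact abs_le_max_abs_abs hx.1 hx.2)
  have hconst : ∀ c : ℝ, ∫ x, c * f x ^ 2 ∂μ = c := fun c => by
    rw [integral_const_mul, hf1, mul_one]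
  constructor
  · calc a = ∫ x, a * f x ^ 2 ∂μ := (hconst a).symm
      _ ≤ ∫ x, V x * f x ^ 2 ∂μ := integral_mono_ae (hsq.const_mul a) hVf
          (hab.mono fun x hx => mul_le_mul_of_nonneg_right hx.1 (sq_nonneg _))
  · calc ∫ x, V x * f x ^ 2 ∂μ ≤ ∫ x, b * f x ^ 2 ∂μ := integral_mono_ae hVf (hsq.const_mul b)
          (hab.mono fun x hx => mul_le_mul_of_nonneg_right hx.2 (sq_nonneg _))
      _ = b := hconst b

theorem gradient_const_mul_comp_smul {E : Type*} [NormedAddCommGroup E] [InnerProductSpace ℝ E]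
    [CompleteSpace E] {f : E → ℝ} (hf : Differentiable ℝ f) (k c : ℝ) (x : E) :
    gradient (fun y => k * f (c • y)) x = (k * c) • gradient f (c • x) := by
  refine HasGradientAt.gradient ?_
  rw [hasGradientAt_iff_hasFDerivAt, map_smul, toDual_gradient]
  refine (((hf (c • x)).hasFDerivAt.comp x ((hasFDerivAt_id x).const_smul c)).const_mul k
    ).congr_fderiv ?_
  ext v
  simp [smul_smul]

section RayleighQuotient

variable {E : Type*} [NormedAddCommGroup E] [InnerProductSpace ℝ E] [FiniteDimensional ℝ E]
  [MeasurableSpace E] (μ : Measure E)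

def unitTestFunctions : Set (E → ℝ) :=
  {f | ContDiff ℝ 1 f ∧ HasCompactSupport f ∧ ∫ x, f x ^ 2 ∂μ = 1}

noncomputable def dirichletEnergy (f : E → ℝ) : ℝ := 1 / 2 * ∫ x, ‖gradient f x‖ ^ 2 ∂μ

noncomputable def rayleighQuotient (V f : E → ℝ) : ℝ :=
  dirichletEnergy μ f - ∫ x, V x * f x ^ 2 ∂μ

variable {μ}

theorem dirichletEnergy_nonneg (f : E → ℝ) : 0 ≤ dirichletEnergy μ f :=
  mul_nonneg (by norm_num) (integral_nonneg fun _ => sq_nonneg _)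

theorem rayleighQuotient_const_mul (u f : E → ℝ) (α : ℝ) :
    rayleighQuotient μ (fun x => α * u x) f
      = dirichletEnergy μ f - α * ∫ x, u x * f x ^ 2 ∂μ := by
  simp only [rayleighQuotient, mul_assoc, integral_const_mul]

variable [BorelSpace E] [μ.IsAddHaarMeasure]

theorem integral_sq_const_mul_comp_smul (f : E → ℝ) (k c : ℝ) :
    ∫ x, (k * f (c • x)) ^ 2 ∂μ = k ^ 2 * |(c ^ finrank ℝ E)⁻¹| * ∫ x, f x ^ 2 ∂μ := by
  simp_rw [mul_pow]
  rw [integral_const_mul, Measure.integral_comp_smul μ (fun x => f x ^ 2), smul_eq_mul,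
    mul_assoc]

theorem dirichletEnergy_const_mul_comp_smul {f : E → ℝ} (hf : Differentiable ℝ f) (k c : ℝ) :
    dirichletEnergy μ (fun x => k * f (c • x))
      = (k * c) ^ 2 * |(c ^ finrank ℝ E)⁻¹| * dirichletEnergy μ f := by
  simp only [dirichletEnergy, gradient_const_mul_comp_smul hf, norm_smul, mul_pow,
    Real.norm_eq_abs, sq_abs]
  rw [integral_const_mul, Measure.integral_comp_smul μ (fun x => ‖gradient f x‖ ^ 2),
    smul_eq_mul]
  ring

theorem const_mul_comp_smul_mem_unitTestFunctions {f : E → ℝ} (hf : ContDiff ℝ 1 f)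
    (hfc : HasCompactSupport f) {k c : ℝ} (hc : c ≠ 0)
    (hkc : k ^ 2 * |(c ^ finrank ℝ E)⁻¹| * ∫ x, f x ^ 2 ∂μ = 1) :
    (fun x => k * f (c • x)) ∈ unitTestFunctions μ :=
  ⟨contDiff_const.mul (hf.comp (contDiff_const_smul c)),
    (hfc.comp_isClosedEmbedding (Homeomorph.smulOfNeZero c hc).isClosedEmbedding).mul_left,
    (integral_sq_const_mul_comp_smul f k c).trans hkc⟩

theorem nonempty_unitTestFunctions : (unitTestFunctions μ).Nonempty := by
  let φ : ContDiffBump (0 : E) := ⟨1, 2, one_pos, one_lt_two⟩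
  have hpos : 0 < ∫ x, φ x ^ 2 ∂μ :=
    (φ.continuous.pow 2).integral_pos_of_hasCompactSupport_nonneg_nonzero
      (φ.hasCompactSupport.comp_left (g := fun y : ℝ => y ^ 2) (by norm_num))
      (fun _ => sq_nonneg _) (x := 0)
      (by rw [φ.one_of_mem_closedBall (Metric.mem_closedBall_self zero_le_one)]; norm_num)
  refine ⟨_, const_mul_comp_smul_mem_unitTestFunctions φ.contDiff φ.hasCompactSupport
    one_ne_zero (k := (√(∫ x, φ x ^ 2 ∂μ))⁻¹) ?_⟩
  rw [inv_pow, Real.sq_sqrt hpos.le, one_pow, inv_one, abs_one, mul_one,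
    inv_mul_cancel₀ hpos.ne']

instance : Nonempty (unitTestFunctions μ) := nonempty_unitTestFunctions.to_subtype

theorem exists_mem_unitTestFunctions_dirichletEnergy_lt {ε : ℝ} (hε : 0 < ε) :
    ∃ f ∈ unitTestFunctions μ, dirichletEnergy μ f < ε := by
  obtain ⟨f, hf, hfc, hf1⟩ := nonempty_unitTestFunctions (μ := μ)
  have hlim : Tendsto (fun c : ℝ => c ^ 2 * dirichletEnergy μ f) (𝓝[>] 0) (𝓝 0) := by
    have h : Continuous fun c : ℝ => c ^ 2 * dirichletEnergy μ f := by fun_prop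
    simpa using (h.tendsto 0).mono_left nhdsWithin_le_nhds
  obtain ⟨c, hcε, hc⟩ := ((hlim.eventually (gt_mem_nhds hε)).and self_mem_nhdsWithin).exists
  have hk : √(c ^ finrank ℝ E) ^ 2 * |(c ^ finrank ℝ E)⁻¹| = 1 := by
    have : 0 < c ^ finrank ℝ E := pow_pos hc _
    rw [Real.sq_sqrt this.le, abs_of_pos (inv_pos.2 this), mul_inv_cancel₀ this.ne']
  refine ⟨_, const_mul_comp_smul_mem_unitTestFunctions hf hfc (ne_of_gt hc)
    (by rw [hk, hf1, one_mul]), ?_⟩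
  rw [dirichletEnergy_const_mul_comp_smul (hf.differentiable one_ne_zero), mul_pow,
    mul_right_comm _ (c ^ 2), hk, one_mul]
  exact hcε

theorem iInf_dirichletEnergy : ⨅ f : unitTestFunctions μ, dirichletEnergy μ f = 0 := by
  have hbdd : BddBelow (range fun f : unitTestFunctions μ => dirichletEnergy μ f) :=
    ⟨0, forall_mem_range.2 fun f => dirichletEnergy_nonneg _⟩
  refine le_antisymm (le_of_forall_gt_imp_ge_of_dense fun ε hε => ?_)
    (le_ciInf fun f => dirichletEnergy_nonneg _)
  obtain ⟨f, hf, hfε⟩ := exists_mem_unitTestFunctions_dirichletEnergy_lt (μ := μ) hε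
  exact (ciInf_le hbdd ⟨f, hf⟩).trans hfε.le

theorem neg_le_rayleighQuotient {f : E → ℝ} (hf : f ∈ unitTestFunctions μ) {V : E → ℝ}
    (hV : AEStronglyMeasurable V μ) {a b : ℝ} (hab : ∀ᵐ x ∂μ, V x ∈ Icc a b) :
    -b ≤ rayleighQuotient μ V f := by
  have hVf := (integral_mul_sq_mem_Icc hf.1.continuous hf.2.1 hf.2.2 hV hab).2
  rw [rayleighQuotient]
  linarith [dirichletEnergy_nonneg (μ := μ) f]

theorem bddBelow_range_rayleighQuotient {V : E → ℝ} (hV : AEStronglyMeasurable V μ) {a b : ℝ}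
    (hab : ∀ᵐ x ∂μ, V x ∈ Icc a b) :
    BddBelow (range fun f : unitTestFunctions μ => rayleighQuotient μ V f) :=
  ⟨-b, forall_mem_range.2 fun f => neg_le_rayleighQuotient f.2 hV hab⟩

end RayleighQuotient

section Eigenvalue

variable {d : ℕ}

theorem eigen_eq_iInf (V : EuclideanSpace ℝ (Fin d) → ℝ) :
    eigen d V = ⨅ f : unitTestFunctions (volume : Measure (EuclideanSpace ℝ (Fin d))),
      rayleighQuotient volume V f := by
  rw [eigen, ← sInf_image']
  congr 1
  ext r
  simp [unitTestFunctions, rayleighQuotient, dirichletEnergy, eq_comm, and_assoc]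

theorem eigen_zero : eigen d (fun _ => 0) = 0 := by
  simpa [eigen_eq_iInf, rayleighQuotient] using iInf_dirichletEnergy

theorem neg_le_eigen {V : EuclideanSpace ℝ (Fin d) → ℝ} (hV : AEStronglyMeasurable V)
    {a b : ℝ} (hab : ∀ᵐ x, V x ∈ Icc a b) : -b ≤ eigen d V := by
  rw [eigen_eq_iInf]
  exact le_ciInf fun f => neg_le_rayleighQuotient f.2 hV hab

variable {u : EuclideanSpace ℝ (Fin d) → ℝ}

theorem neg_abs_le_eigen_const_mul (hu : Measurable u) (hu1 : ∀ x, |u x| ≤ 1) (α : ℝ) :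
    -|α| ≤ eigen d (fun x => α * u x) :=
  neg_le_eigen (hu.const_mul α).aestronglyMeasurable
    (ae_of_all _ fun x => mul_mem_Icc_neg_abs_abs (hu1 x))

theorem concaveOn_eigen_const_mul (hu : Measurable u) (hu1 : ∀ x, |u x| ≤ 1) :
    ConcaveOn ℝ univ fun α => eigen d (fun x => α * u x) := by
  simp_rw [eigen_eq_iInf]
  refine ConcaveOn.ciInf (fun f => ?_) fun α _ => bddBelow_range_rayleighQuotient
    (hu.const_mul α).aestronglyMeasurable (ae_of_all _ fun x => mul_mem_Icc_neg_abs_abs (hu1 x))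
  simp_rw [rayleighQuotient_const_mul]
  exact concaveOn_const_sub_mul _ _

theorem lipschitzWith_eigen_const_mul (hu : Measurable u) (hu1 : ∀ x, |u x| ≤ 1) :
    LipschitzWith 1 fun α => eigen d (fun x => α * u x) := by
  simp_rw [eigen_eq_iInf]
  refine LipschitzWith.ciInf (fun f => ?_) fun α => bddBelow_range_rayleighQuotient
    (hu.const_mul α).aestronglyMeasurable (ae_of_all _ fun x => mul_mem_Icc_neg_abs_abs (hu1 x))
  simp_rw [rayleighQuotient_const_mul]
  exact lipschitzWith_const_sub_mul _ (abs_le.2 (integral_mul_sq_mem_Icc f.2.1.continuous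
    f.2.2.1 f.2.2.2 hu.aestronglyMeasurable (ae_of_all _ fun x => abs_le.1 (hu1 x))))

end Eigenvalue

theorem ae_notMem_of_lintegral_comp_ne_top {X Y : Type*} [MeasurableSpace X] [MeasurableSpace Y]
    {μ : Measure X} {H : Y → ℝ≥0∞} {u : X → Y} {S : Set Y} (hu : Measurable u)
    (hS : MeasurableSet S) (hH : ∀ y ∈ S, H y = ⊤) (hI : ∫⁻ x, H (u x) ∂μ ≠ ⊤) :
    ∀ᵐ x ∂μ, u x ∉ S := by
  refine (measure_eq_zero_iff_ae_notMem (s := u ⁻¹' S)).1 (by_contra fun hne => hI (top_unique ?_))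
  calc ⊤ = ∫⁻ _ in u ⁻¹' S, ⊤ ∂μ := by rw [setLIntegral_const, ENNReal.top_mul hne]
    _ = ∫⁻ x in u ⁻¹' S, H (u x) ∂μ := (setLIntegral_congr_fun (hu hS) fun x hx => hH _ hx).symm
    _ ≤ ∫⁻ x, H (u x) ∂μ := setLIntegral_le_lintegral _ _

section Ell

variable {d : ℕ} {H : ℝ → ℝ≥0∞}

def admissibleProfiles (d : ℕ) (H : ℝ → ℝ≥0∞) : Set (EuclideanSpace ℝ (Fin d) → ℝ) :=
  {u | Measurable u ∧ (∀ x, |u x| ≤ 1) ∧ ∫⁻ x, H (u x) ≤ d}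

theorem ell_eq_iInf (α : ℝ) :
    ell d H α = ⨅ u : admissibleProfiles d H, eigen d (fun x => α * u.1 x) := by
  rw [ell, ← sInf_image' (s := admissibleProfiles d H)
    (f := fun v : EuclideanSpace ℝ (Fin d) → ℝ => eigen d fun x => α * v x)]
  congr 1
  ext r
  simp [admissibleProfiles, eq_comm, and_assoc]

theorem zero_mem_admissibleProfiles (hH0 : H 0 = 0) : 0 ∈ admissibleProfiles d H :=
  ⟨measurable_const, fun _ => by simp, by simp [hH0]⟩

theorem ae_mem_Icc_of_mem_admissibleProfiles {m M : ℝ} (hm : ∀ y < m, H y = ⊤)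
    (hM : ∀ y, M < y → H y = ⊤) {u : EuclideanSpace ℝ (Fin d) → ℝ}
    (hu : u ∈ admissibleProfiles d H) : ∀ᵐ x, u x ∈ Icc m M := by
  have hI : ∫⁻ x, H (u x) ≠ ⊤ := ne_top_of_le_ne_top (ENNReal.natCast_ne_top d) hu.2.2
  filter_upwards [ae_notMem_of_lintegral_comp_ne_top hu.1 measurableSet_Iio hm hI,
    ae_notMem_of_lintegral_comp_ne_top hu.1 measurableSet_Ioi hM hI] with x hxm hxM
  exact ⟨not_lt.1 hxm, not_lt.1 hxM⟩

theorem bddBelow_range_eigen (α : ℝ) :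
    BddBelow (range fun u : admissibleProfiles d H => eigen d (fun x => α * u.1 x)) :=
  ⟨-|α|, forall_mem_range.2 fun u => neg_abs_le_eigen_const_mul u.2.1 u.2.2.1 α⟩

variable (hH0 : H 0 = 0)
include hH0

theorem nonempty_admissibleProfiles : Nonempty (admissibleProfiles d H) :=
  ⟨⟨0, zero_mem_admissibleProfiles hH0⟩⟩

theorem concaveOn_ell : ConcaveOn ℝ univ (ell d H) := by
  have := nonempty_admissibleProfiles (d := d) hH0
  simp_rw [funext ell_eq_iInf]
  exact ConcaveOn.ciInf (fun u => concaveOn_eigen_const_mul u.2.1 u.2.2.1)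
    fun α _ => bddBelow_range_eigen α

theorem lipschitzWith_ell : LipschitzWith 1 (ell d H) := by
  have := nonempty_admissibleProfiles (d := d) hH0
  simp_rw [funext ell_eq_iInf]
  exact LipschitzWith.ciInf (fun u => lipschitzWith_eigen_const_mul u.2.1 u.2.2.1)
    bddBelow_range_eigen

theorem ell_zero : ell d H 0 = 0 := by
  have := nonempty_admissibleProfiles (d := d) hH0
  simp [ell_eq_iInf, eigen_zero]

theorem ell_nonpos (α : ℝ) : ell d H α ≤ 0 := by
  rw [ell_eq_iInf]
  refine (ciInf_le (bddBelow_range_eigen α) ⟨0, zero_mem_admissibleProfiles hH0⟩).trans ?_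
  simp [eigen_zero]

theorem neg_le_ell {α a b : ℝ}
    (hab : ∀ u ∈ admissibleProfiles d H, ∀ᵐ x, α * u x ∈ Icc a b) : -b ≤ ell d H α := by
  have := nonempty_admissibleProfiles (d := d) hH0
  rw [ell_eq_iInf]
  exact le_ciInf fun u => neg_le_eigen (u.2.1.const_mul α).aestronglyMeasurable (hab u u.2)

end Ell

section LegendreTransform

noncomputable def legendreTransform (Λ : ℝ → ℝ) (y : ℝ) : ℝ≥0∞ :=
  ⨆ t, ENNReal.ofReal (t * y - Λ t)

variable {Λ : ℝ → ℝ}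

theorem legendreTransform_zero (hΛ : ∀ t, 0 ≤ Λ t) : legendreTransform Λ 0 = 0 := by
  simp [legendreTransform, hΛ]

theorem legendreTransform_eq_top_of_lt {M y : ℝ} (hΛ : ∀ t, 0 ≤ t → Λ t ≤ t * M) (hy : M < y) :
    legendreTransform Λ y = ⊤ := by
  refine eq_top_iff.2 (ENNReal.iSup_natCast ▸ iSup_le fun n => ?_)
  have hyM : 0 < y - M := sub_pos.2 hy
  have ht : n / (y - M) * (y - M) = n := div_mul_cancel₀ _ hyM.ne'
  refine le_iSup_of_le (n / (y - M)) (ENNReal.ofReal_natCast n ▸ ENNReal.ofReal_le_ofReal ?_)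
  nlinarith [hΛ (n / (y - M)) (by positivity)]

theorem legendreTransform_eq_top_of_gt {m y : ℝ} (hΛ : ∀ t ≤ 0, Λ t ≤ t * m) (hy : y < m) :
    legendreTransform Λ y = ⊤ := by
  have h := legendreTransform_eq_top_of_lt (Λ := fun t => Λ (-t)) (M := -m) (y := -y)
    (fun t ht => by simpa using hΛ (-t) (by linarith)) (by linarith)
  rw [legendreTransform, ← (Equiv.neg ℝ).iSup_comp] at h
  simpa [legendreTransform] using h

end LegendreTransform

section CumulantGeneratingFunction

variable {Ω : Type*} [MeasurableSpace Ω] {μ : Measure Ω} [IsProbabilityMeasure μ] {X : Ω → ℝ}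
  {t : ℝ}

theorem cgf_nonneg (hX : Integrable X μ) (hX0 : μ[X] = 0)
    (ht : Integrable (fun ω => Real.exp (t * X ω)) μ) : 0 ≤ cgf X μ t := by
  refine Real.log_nonneg ?_
  calc 1 = ∫ ω, (1 + t * X ω) ∂μ := by
        rw [integral_add (integrable_const 1) (hX.const_mul t), integral_const_mul, hX0]
        simp
    _ ≤ mgf X μ t := integral_mono ((integrable_const 1).add (hX.const_mul t)) ht
        fun ω => by linarith [Real.add_one_le_exp (t * X ω)]

theorem cgf_le_mul_of_ae_le {M : ℝ} (hXM : ∀ᵐ ω ∂μ, X ω ≤ M) (ht : 0 ≤ t)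
    (hint : Integrable (fun ω => Real.exp (t * X ω)) μ) : cgf X μ t ≤ t * M :=
  (Real.log_le_iff_le_exp (mgf_pos hint)).2 <|
    (mgf_mono_of_nonneg hXM ht (integrable_const _)).trans_eq (mgf_const M)

theorem cgf_le_mul_of_ae_ge {m : ℝ} (hXm : ∀ᵐ ω ∂μ, m ≤ X ω) (ht : t ≤ 0)
    (hint : Integrable (fun ω => Real.exp (t * X ω)) μ) : cgf X μ t ≤ t * m :=
  (Real.log_le_iff_le_exp (mgf_pos hint)).2 <|
    (mgf_anti_of_nonpos hXm ht (integrable_const _)).trans_eq (mgf_const m)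

end CumulantGeneratingFunction

theorem stmt17_general {Ω : Type*} [MeasurableSpace Ω] (μ : Measure Ω) [IsProbabilityMeasure μ]
    (ξ : Ω → ℝ) (hmeas : Measurable ξ)
    (hbdd : ∀ᵐ ω ∂μ, |ξ ω| ≤ 1)
    (hmean : ∫ ω, ξ ω ∂μ = 0)
    (m M : ℝ) (hm : m = essInf ξ μ) (hM : M = essSup ξ μ)
    (Λ : ℝ → ℝ)
    (hΛ : ∀ α : ℝ, Λ α = Real.log (∫ ω, Real.exp (α * ξ ω) ∂μ))
    (H : ℝ → ℝ≥0∞)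
    (hH : ∀ y : ℝ, H y = ⨆ α : ℝ, ENNReal.ofReal (α * y - Λ α))
    (d : ℕ) :
    ConcaveOn ℝ Set.univ (ell d H) ∧
    Continuous (ell d H) ∧
    ell d H 0 = 0 ∧
    (∀ α : ℝ, ell d H α ≤ 0) ∧
    (∀ α : ℝ, 0 ≤ α → -(α * M) ≤ ell d H α) ∧
    (∀ α : ℝ, α ≤ 0 → -(α * m) ≤ ell d H α) := by
  obtain rfl : Λ = cgf ξ μ := funext hΛ
  obtain rfl : H = legendreTransform (cgf ξ μ) := funext hH
  have hξ : ∀ᵐ ω ∂μ, ξ ω ∈ Icc (-1) 1 := hbdd.mono fun ω h => abs_le.1 h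
  have hexp t : Integrable (fun ω => Real.exp (t * ξ ω)) μ :=
    integrable_exp_mul_of_mem_Icc hmeas.aemeasurable hξ
  have hξM : ∀ᵐ ω ∂μ, ξ ω ≤ M :=
    hM ▸ ae_le_essSup (isBoundedUnder_of_eventually_le (hξ.mono fun _ h => h.2))
  have hξm : ∀ᵐ ω ∂μ, m ≤ ξ ω :=
    hm ▸ ae_essInf_le (isBoundedUnder_of_eventually_ge (hξ.mono fun _ h => h.1))
  have hH0 : legendreTransform (cgf ξ μ) 0 = 0 := legendreTransform_zero fun t =>
    cgf_nonneg (Integrable.of_mem_Icc (-1) 1 hmeas.aemeasurable hξ) hmean (hexp t)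
  have hprofile {u} (hu : u ∈ admissibleProfiles d (legendreTransform (cgf ξ μ))) :
      ∀ᵐ x, u x ∈ Icc m M :=
    ae_mem_Icc_of_mem_admissibleProfiles
      (fun _ => legendreTransform_eq_top_of_gt fun t ht => cgf_le_mul_of_ae_ge hξm ht (hexp t))
      (fun _ => legendreTransform_eq_top_of_lt fun t ht => cgf_le_mul_of_ae_le hξM ht (hexp t))
      hu
  refine ⟨concaveOn_ell hH0, (lipschitzWith_ell hH0).continuous, ell_zero hH0, ell_nonpos hH0,
    fun α hα => neg_le_ell hH0 (a := α * m) fun u hu => (hprofile hu).mono fun x hx =>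
      ⟨mul_le_mul_of_nonneg_left hx.1 hα, mul_le_mul_of_nonneg_left hx.2 hα⟩,
    fun α hα => neg_le_ell hH0 (a := α * M) fun u hu => (hprofile hu).mono fun x hx =>
      ⟨mul_le_mul_of_nonpos_left hx.2 hα, mul_le_mul_of_nonpos_left hx.1 hα⟩⟩

/-- with `H` the Legendre transform of the log-Laplace
transform of the scenery variable `ξ` (`|ξ| ≤ 1` a.s., `E ξ = 0`,
`E ξ² ≠ 0`), `m = essinf ξ`, `M = esssup ξ`, the function
`l(α) = inf { λ(αu, ℝ^d) : u ∈ B₁, I(u) ≤ d }` is concave, continuous,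
`l(0) = 0`, `l ≤ 0` everywhere, and `−αM ≤ l(α)` for `α ≥ 0`,
`−αm ≤ l(α)` for `α ≤ 0`. -/
theorem stmt17 {Ω : Type*} [MeasurableSpace Ω] (μ : Measure Ω) [IsProbabilityMeasure μ]
    (ξ : Ω → ℝ) (hmeas : Measurable ξ)
    (hbdd : ∀ᵐ ω ∂μ, |ξ ω| ≤ 1)
    (hmean : ∫ ω, ξ ω ∂μ = 0)
    (hvar : ∫ ω, (ξ ω) ^ 2 ∂μ ≠ 0)
    (m M : ℝ) (hm : m = essInf ξ μ) (hM : M = essSup ξ μ)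
    (Λ : ℝ → ℝ)
    (hΛ : ∀ α : ℝ, Λ α = Real.log (∫ ω, Real.exp (α * ξ ω) ∂μ))
    (H : ℝ → ℝ≥0∞)
    (hH : ∀ y : ℝ, H y = ⨆ α : ℝ, ENNReal.ofReal (α * y - Λ α))
    (d : ℕ) (hd : 0 < d) :
    ConcaveOn ℝ Set.univ (ell d H) ∧
    Continuous (ell d H) ∧
    ell d H 0 = 0 ∧
    (∀ α : ℝ, ell d H α ≤ 0) ∧
    (∀ α : ℝ, 0 ≤ α → -(α * M) ≤ ell d H α) ∧
    (∀ α : ℝ, α ≤ 0 → -(α * m) ≤ ell d H α) :=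
  stmt17_general μ ξ hmeas hbdd hmean m M hm hM Λ hΛ H hH d
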